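/- Fix integers p, q ≥ 1 and a constant C > 0, and work in ℝ^p × ℝ^q with the Euclidean norm ‖(x₁,x₂)‖² = ‖x₁‖² + ‖x₂‖². For a unit vector u ∈ ℝ^q, define N_u = {(x₁, z·u) : x₁ ∈ ℝ^p, z ≥ 0, ‖x₁‖² + (C − z)² = C²}. Let ξ = (ξ₁, ξ₂) ∈ ℝ^p × ℝ^q with ξ₂ ≠ 0, set ũ = −ξ₂/‖ξ₂‖, and let N₂^C = {(z₁, z₂) ∈ ℝ² : z₁² + (C + z₂)² = C²} be the circle of radius C in the plane centered at (0, −C). Then the Euclidean infimum distance from ξ to N_ũ equals the Euclidean infimum distance from the point (‖ξ₁‖, ‖ξ₂‖) ∈ ℝ² to the circle N₂^C. -/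

import Mathlib

/-!
Since `ũ` points directly away from `ξ₂`, a point `(x₁, z • ũ)` of `N_ũ` lies at distance
`√(‖ξ₁ - x₁‖² + (‖ξ₂‖ + z)²)` from `ξ`. As `‖ξ₁ - x₁‖ ≥ |‖ξ₁‖ - ‖x₁‖|`, with equality when `x₁` is
a nonnegative multiple of a unit vector along `ξ₁`, the map `(x₁, z • ũ) ↦ (‖x₁‖, -z)` sends `N_ũ`
into the planar circle without increasing the distance to `(‖ξ₁‖, ‖ξ₂‖)`. Conversely a point
`(w₀, w₁)` of the circle has `w₁ ≤ 0` because `C > 0`, and for a unit vector `v` along `ξ₁`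
(which needs `p ≥ 1`) lifts to `(|w₀| • v, -w₁ • ũ) ∈ N_ũ` at no greater distance, because
`|‖ξ₁‖ - |w₀|| ≤ |‖ξ₁‖ - w₀|`.
-/

open Metric

/-- The bounding sphere `N_u = {(x₁, z·u) : z ≥ 0, ‖x₁‖² + (C − z)² = C²}` inside
`ℝ^p × ℝ^q` equipped with the Euclidean (L²) product norm. -/
def Nsphere (p q : ℕ) (C : ℝ) (u : EuclideanSpace ℝ (Fin q)) :
    Set (WithLp 2 (EuclideanSpace ℝ (Fin p) × EuclideanSpace ℝ (Fin q))) :=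
  {w | ∃ (x₁ : EuclideanSpace ℝ (Fin p)) (z : ℝ), 0 ≤ z ∧
    ‖x₁‖ ^ 2 + (C - z) ^ 2 = C ^ 2 ∧
    w = (WithLp.equiv 2 (EuclideanSpace ℝ (Fin p) × EuclideanSpace ℝ (Fin q))).symm (x₁, z • u)}

theorem Metric.infDist_le_infDist_of_forall_exists_dist_le {X Y : Type*} [PseudoMetricSpace X]
    [PseudoMetricSpace Y] {x : X} {y : Y} {s : Set X} {t : Set Y} (ht : t.Nonempty)
    (h : ∀ b ∈ t, ∃ a ∈ s, dist x a ≤ dist y b) : infDist x s ≤ infDist y t :=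
  (le_infDist ht).2 fun b hb =>
    let ⟨_, ha, hab⟩ := h b hb
    (infDist_le_dist_of_mem ha).trans hab

section NormedSpace

variable {E : Type*} [NormedAddCommGroup E] [NormedSpace ℝ E]

theorem exists_norm_eq_one_smul_eq [Nontrivial E] (x : E) : ∃ v : E, ‖v‖ = 1 ∧ ‖x‖ • v = x := by
  by_cases hx : x = 0
  · obtain ⟨v, hv⟩ := exists_norm_eq E zero_le_one
    exact ⟨v, hv, by simp [hx]⟩
  · exact ⟨‖x‖⁻¹ • x, norm_smul_inv_norm hx, by
      rw [smul_smul, mul_inv_cancel₀ (norm_ne_zero_iff.2 hx), one_smul]⟩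

theorem exists_norm_eq_dist_eq_abs_sub [Nontrivial E] (x : E) {r : ℝ} (hr : 0 ≤ r) :
    ∃ y : E, ‖y‖ = r ∧ dist x y = |‖x‖ - r| := by
  obtain ⟨v, hv, hxv⟩ := exists_norm_eq_one_smul_eq x
  refine ⟨r • v, by rw [norm_smul, hv, mul_one, Real.norm_of_nonneg hr], ?_⟩
  rw [dist_eq_norm, ← hxv, ← sub_smul, norm_smul, hv, mul_one, Real.norm_eq_abs, norm_smul, hv,
    mul_one, norm_norm]

theorem dist_smul_neg_normalize {x : E} (hx : x ≠ 0) {z : ℝ} (hz : 0 ≤ z) :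
    dist x (z • -(‖x‖⁻¹ • x)) = ‖x‖ + z := by
  have hx' : 0 < ‖x‖ := norm_pos_iff.2 hx
  have : x - z • -(‖x‖⁻¹ • x) = (1 + z * ‖x‖⁻¹) • x := by
    rw [smul_neg, smul_smul, sub_neg_eq_add, add_smul, one_smul]
  rw [dist_eq_norm, this, norm_smul, Real.norm_of_nonneg (by positivity)]
  field_simp

end NormedSpace

theorem WithLp.dist_toLp_prod_of_L2 {E F : Type*} [SeminormedAddCommGroup E]
    [SeminormedAddCommGroup F] (x₁ y₁ : E) (x₂ y₂ : F) :
    dist (WithLp.toLp 2 (x₁, x₂)) (WithLp.toLp 2 (y₁, y₂)) =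
      √(dist x₁ y₁ ^ 2 + dist x₂ y₂ ^ 2) :=
  WithLp.prod_dist_eq_of_L2 _ _

theorem dist_toLp_smul_neg_normalize {E F : Type*} [SeminormedAddCommGroup E]
    [NormedAddCommGroup F] [NormedSpace ℝ F] (ξ₁ x₁ : E) {ξ₂ : F} (hξ₂ : ξ₂ ≠ 0) {z : ℝ}
    (hz : 0 ≤ z) :
    dist (WithLp.toLp 2 (ξ₁, ξ₂)) (WithLp.toLp 2 (x₁, z • -(‖ξ₂‖⁻¹ • ξ₂))) =
      √(dist ξ₁ x₁ ^ 2 + (‖ξ₂‖ + z) ^ 2) := by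
  rw [WithLp.dist_toLp_prod_of_L2, dist_smul_neg_normalize hξ₂ hz]

theorem EuclideanSpace.dist_toLp_fin_two (a b : ℝ) (w : EuclideanSpace ℝ (Fin 2)) :
    dist (WithLp.toLp 2 ![a, b]) w = √((a - w 0) ^ 2 + (b - w 1) ^ 2) := by
  rw [EuclideanSpace.dist_eq, Fin.sum_univ_two]
  simp [Real.dist_eq, sq_abs]

theorem nonpos_of_sq_add_sq_add_eq_sq {C x y : ℝ} (hC : 0 < C)
    (h : x ^ 2 + (C + y) ^ 2 = C ^ 2) : y ≤ 0 := by
  nlinarith [sq_nonneg x, sq_nonneg y]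

theorem sq_sub_abs_le_sq_sub {a : ℝ} (ha : 0 ≤ a) (b : ℝ) : (a - |b|) ^ 2 ≤ (a - b) ^ 2 :=
  sq_le_sq.2 (by simpa only [abs_of_nonneg ha] using abs_abs_sub_abs_le_abs_sub a b)

section Reduction

variable {p q : ℕ} {C : ℝ} {ξ₁ : EuclideanSpace ℝ (Fin p)} {ξ₂ : EuclideanSpace ℝ (Fin q)}

theorem exists_mem_circle_dist_le_of_mem_Nsphere (hξ₂ : ξ₂ ≠ 0)
    {y : WithLp 2 (EuclideanSpace ℝ (Fin p) × EuclideanSpace ℝ (Fin q))}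
    (hy : y ∈ Nsphere p q C (-(‖ξ₂‖⁻¹ • ξ₂))) :
    ∃ w ∈ {w : EuclideanSpace ℝ (Fin 2) | w 0 ^ 2 + (C + w 1) ^ 2 = C ^ 2},
      dist (WithLp.toLp 2 ![‖ξ₁‖, ‖ξ₂‖]) w ≤ dist (WithLp.toLp 2 (ξ₁, ξ₂)) y := by
  obtain ⟨x₁, z, hz, hx₁z, rfl⟩ := hy
  refine ⟨WithLp.toLp 2 ![‖x₁‖, -z], by simpa [← sub_eq_add_neg] using hx₁z, ?_⟩
  have hnorm : (‖ξ₁‖ - ‖x₁‖) ^ 2 ≤ dist ξ₁ x₁ ^ 2 := by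
    rw [← sq_abs, dist_eq_norm]
    exact pow_le_pow_left₀ (abs_nonneg _) (abs_norm_sub_norm_le ξ₁ x₁) 2
  rw [WithLp.equiv_symm_apply, EuclideanSpace.dist_toLp_fin_two,
    dist_toLp_smul_neg_normalize ξ₁ x₁ hξ₂ hz]
  refine Real.sqrt_le_sqrt ?_
  simpa using hnorm

theorem exists_mem_Nsphere_dist_le_of_mem_circle (hp : 1 ≤ p) (hC : 0 < C) (hξ₂ : ξ₂ ≠ 0)
    {w : EuclideanSpace ℝ (Fin 2)} (hw : w 0 ^ 2 + (C + w 1) ^ 2 = C ^ 2) :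
    ∃ y ∈ Nsphere p q C (-(‖ξ₂‖⁻¹ • ξ₂)),
      dist (WithLp.toLp 2 (ξ₁, ξ₂)) y ≤ dist (WithLp.toLp 2 ![‖ξ₁‖, ‖ξ₂‖]) w := by
  have : Nonempty (Fin p) := ⟨⟨0, hp⟩⟩
  obtain ⟨x₁, hx₁, hdist⟩ := exists_norm_eq_dist_eq_abs_sub ξ₁ (abs_nonneg (w 0))
  have hz : 0 ≤ -w 1 := neg_nonneg.2 (nonpos_of_sq_add_sq_add_eq_sq hC hw)
  refine ⟨_, ⟨x₁, -w 1, hz, by rw [hx₁, sq_abs, sub_neg_eq_add, hw], rfl⟩, ?_⟩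
  rw [WithLp.equiv_symm_apply, dist_toLp_smul_neg_normalize ξ₁ x₁ hξ₂ hz,
    EuclideanSpace.dist_toLp_fin_two, hdist, sq_abs]
  refine Real.sqrt_le_sqrt ?_
  rw [← sub_eq_add_neg]
  exact add_le_add_left (sq_sub_abs_le_sq_sub (norm_nonneg ξ₁) (w 0)) _

end Reduction

theorem stmt_14_general (p q : ℕ) (hp : 1 ≤ p) (C : ℝ) (hC : 0 < C)
    (ξ₁ : EuclideanSpace ℝ (Fin p)) (ξ₂ : EuclideanSpace ℝ (Fin q)) (hξ₂ : ξ₂ ≠ 0) :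
    Metric.infDist
        ((WithLp.equiv 2 (EuclideanSpace ℝ (Fin p) × EuclideanSpace ℝ (Fin q))).symm (ξ₁, ξ₂))
        (Nsphere p q C (-(‖ξ₂‖⁻¹ • ξ₂))) =
      Metric.infDist
        ((WithLp.equiv 2 (Fin 2 → ℝ)).symm ![‖ξ₁‖, ‖ξ₂‖] : EuclideanSpace ℝ (Fin 2))
        {w : EuclideanSpace ℝ (Fin 2) | (w 0) ^ 2 + (C + w 1) ^ 2 = C ^ 2} :=
  le_antisymm
    (infDist_le_infDist_of_forall_exists_dist_le ⟨0, by simp⟩ fun _ hw =>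
      exists_mem_Nsphere_dist_le_of_mem_circle hp hC hξ₂ hw)
    (infDist_le_infDist_of_forall_exists_dist_le ⟨_, 0, 0, le_rfl, by simp, rfl⟩ fun _ hy =>
      exists_mem_circle_dist_le_of_mem_Nsphere hξ₂ hy)

/-- Two-dimensional reduction: the distance from `ξ = (ξ₁, ξ₂)` (with `ξ₂ ≠ 0`) to the
farthest bounding sphere `N_ũ`, `ũ = −ξ₂/‖ξ₂‖`, equals the Euclidean distance in the
plane from `(‖ξ₁‖, ‖ξ₂‖)` to the circle `{z₁² + (C + z₂)² = C²}` of radius `C`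
centered at `(0, −C)`. -/
theorem stmt_14 (p q : ℕ) (hp : 1 ≤ p) (hq : 1 ≤ q) (C : ℝ) (hC : 0 < C)
    (ξ₁ : EuclideanSpace ℝ (Fin p)) (ξ₂ : EuclideanSpace ℝ (Fin q)) (hξ₂ : ξ₂ ≠ 0) :
    Metric.infDist
        ((WithLp.equiv 2 (EuclideanSpace ℝ (Fin p) × EuclideanSpace ℝ (Fin q))).symm (ξ₁, ξ₂))
        (Nsphere p q C (-(‖ξ₂‖⁻¹ • ξ₂))) =
      Metric.infDist
        ((WithLp.equiv 2 (Fin 2 → ℝ)).symm ![‖ξ₁‖, ‖ξ₂‖] : EuclideanSpace ℝ (Fin 2))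
        {w : EuclideanSpace ℝ (Fin 2) | (w 0) ^ 2 + (C + w 1) ^ 2 = C ^ 2} :=
  stmt_14_general p q hp C hC ξ₁ ξ₂ hξ₂
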